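/- The linear map ζ_m : V_m / V_{m−1} → W_m, induced by f ↦ [f], is injective, where V_m is the space of C-valued Vassiliev invariants of type m and W_m the space of degree-m weight systems. Equivalently, the kernel of [·] : V_m → W_m is exactly V_{m−1}. -/
import Mathlib

/-- The kernel of `[·] : V_m → W_m` is exactly `V_{m−1}` (equivalently, the induced
map `ζ_m : V_m/V_{m−1} → W_m` is injective).  Here `f` is a Vassiliev invariant of
type `m` of framed singular links (`hvanish`), `W = [f]` is its weight system:
a function on chord diagrams with `W(chord L) = f(L)` for every singular link with `m`
double points (`hW`), every degree-`m` chord diagram is realized by some singular link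
(`hsurj`), and the chord diagram of a singular link with `d` double points has degree
`d` (`hdeg`).  Then `[f] = 0` on degree-`m` diagrams if and only if `f` is a Vassiliev
invariant of type `m − 1`, i.e. vanishes on all singular links with at least `m`
double points. -/
theorem weight_system_kernel
    {SingLink Diagram : Type} (ndp : SingLink → ℕ) (chord : SingLink → Diagram)
    (deg : Diagram → ℕ) (m : ℕ) (f : SingLink → ℂ) (W : Diagram → ℂ)
    (hvanish : ∀ L, m < ndp L → f L = 0)
    (hdeg : ∀ L, deg (chord L) = ndp L)
    (hW : ∀ L, ndp L = m → W (chord L) = f L)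
    (hsurj : ∀ D, deg D = m → ∃ L, ndp L = m ∧ chord L = D) :
    (∀ D, deg D = m → W D = 0) ↔ (∀ L, m ≤ ndp L → f L = 0) := by
  constructor
  · intro h L hm
    rcases eq_or_lt_of_le hm with he | hlt
    · rw [← hW L he.symm]
      exact h _ (by rw [hdeg, he])
    · exact hvanish L hlt
  · intro h D hD
    obtain ⟨L, hL, rfl⟩ := hsurj D hD
    rw [hW L hL]
    exact h L hL.ge
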